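/- arXiv:0911.2996 — 2 statements merged into one kernel-verified Lean document; each statement's English description precedes it below -/
import Mathlib

section
/- Let N ≥ 1 and let F : ℝ^N → ℝ be a smooth function satisfying −Δ²F(y) + (1/4)·(y·∇F(y)) + (N/4)·F(y) = 0 for every y ∈ ℝ^N. Then for every multi-index β ∈ ℕ^N, the function ψ_β = D^β F satisfies −Δ²ψ_β(y) + (1/4)·(y·∇ψ_β(y)) + (N/4)·ψ_β(y) = −(|β|/4)·ψ_β(y) for every y ∈ ℝ^N; that is, D^β F is an eigenfunction of the operator 𝐁 = −Δ² + (1/4) y·∇ + (N/4)I with eigenvalue −|β|/4. -/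
open MeasureTheory Real

/-- Partial derivative ∂/∂yᵢ of a scalar function on ℝ^N. -/
noncomputable def pd {N : ℕ} (i : Fin N) (f : (Fin N → ℝ) → ℝ) : (Fin N → ℝ) → ℝ :=
  fun y => fderiv ℝ f y (Pi.single i 1)

/-- Laplacian Δf = Σᵢ ∂²f/∂yᵢ². -/
noncomputable def lap {N : ℕ} (f : (Fin N → ℝ) → ℝ) : (Fin N → ℝ) → ℝ :=
  fun y => ∑ i, pd i (pd i f) y

/-- Bi-Laplacian Δ²f. -/
noncomputable def biLap {N : ℕ} (f : (Fin N → ℝ) → ℝ) : (Fin N → ℝ) → ℝ :=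
  lap (lap f)

/-- Iterated partial derivative D^β = ∂^{β₁}_{y₁} ⋯ ∂^{β_N}_{y_N}. -/
noncomputable def mDeriv {N : ℕ} (β : Fin N → ℕ) (f : (Fin N → ℝ) → ℝ) : (Fin N → ℝ) → ℝ :=
  (((List.finRange N).map fun i => (pd i)^[β i]).foldr (· ∘ ·) id) f

section Aux
variable {N : ℕ}

lemma contDiff_pd {f : (Fin N → ℝ) → ℝ} (hf : ContDiff ℝ (⊤ : ℕ∞) f) (i : Fin N) :
    ContDiff ℝ (⊤ : ℕ∞) (pd i f) :=
  (hf.fderiv_right (m := (⊤ : ℕ∞)) (by simp)).clm_apply contDiff_const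

lemma contDiff_lap {f : (Fin N → ℝ) → ℝ} (hf : ContDiff ℝ (⊤ : ℕ∞) f) :
    ContDiff ℝ (⊤ : ℕ∞) (lap f) :=
  ContDiff.sum fun i _ => contDiff_pd (contDiff_pd hf i) i

lemma pd_eq_snd {f : (Fin N → ℝ) → ℝ} (hf : ContDiff ℝ (⊤ : ℕ∞) f) (i j : Fin N) (y : Fin N → ℝ) :
    pd i (pd j f) y = (fderiv ℝ (fderiv ℝ f) y) (Pi.single i 1) (Pi.single j 1) := by
  have hd2 : DifferentiableAt ℝ (fderiv ℝ f) y :=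
    ((hf.fderiv_right (m := (⊤ : ℕ∞)) (by simp)).differentiable (by simp)) y
  show fderiv ℝ (fun z => fderiv ℝ f z (Pi.single j 1)) y (Pi.single i 1) = _
  rw [fderiv_clm_apply hd2 (differentiableAt_const _)]
  simp

lemma pd_comm {f : (Fin N → ℝ) → ℝ} (hf : ContDiff ℝ (⊤ : ℕ∞) f) (i j : Fin N) (y : Fin N → ℝ) :
    pd i (pd j f) y = pd j (pd i f) y := by
  have hder : ∀ z, HasFDerivAt f (fderiv ℝ f z) z := fun z =>
    (hf.differentiable (by simp) z).hasFDerivAt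
  have hd2 : DifferentiableAt ℝ (fderiv ℝ f) y :=
    ((hf.fderiv_right (m := (⊤ : ℕ∞)) (by simp)).differentiable (by simp)) y
  rw [pd_eq_snd hf i j y, pd_eq_snd hf j i y]
  exact second_derivative_symmetric hder hd2.hasFDerivAt _ _

lemma pd_sum {ι : Type*} (s : Finset ι) (g : ι → (Fin N → ℝ) → ℝ)
    (hg : ∀ k ∈ s, ContDiff ℝ (⊤ : ℕ∞) (g k)) (j : Fin N) (y : Fin N → ℝ) :
    pd j (fun z => ∑ k ∈ s, g k z) y = ∑ k ∈ s, pd j (g k) y := by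
  show fderiv ℝ (fun z => ∑ k ∈ s, g k z) y (Pi.single j 1) = _
  rw [fderiv_fun_sum fun k hk => ((hg k hk).differentiable (by simp)) y]
  simp [pd]

lemma pd_lap {f : (Fin N → ℝ) → ℝ} (hf : ContDiff ℝ (⊤ : ℕ∞) f) (j : Fin N) (y : Fin N → ℝ) :
    pd j (lap f) y = lap (pd j f) y := by
  have : lap f = fun z => ∑ i, pd i (pd i f) z := rfl
  rw [this, pd_sum Finset.univ _ (fun i _ => contDiff_pd (contDiff_pd hf i) i) j y]
  refine Finset.sum_congr rfl fun i _ => ?_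
  rw [pd_comm (contDiff_pd hf i) j i y]
  have h2 : pd j (pd i f) = pd i (pd j f) := funext fun z => pd_comm hf j i z
  rw [h2]

lemma pd_biLap {f : (Fin N → ℝ) → ℝ} (hf : ContDiff ℝ (⊤ : ℕ∞) f) (j : Fin N) (y : Fin N → ℝ) :
    pd j (biLap f) y = biLap (pd j f) y := by
  have h1 : pd j (lap f) = lap (pd j f) := funext fun z => pd_lap hf j z
  show pd j (lap (lap f)) y = lap (lap (pd j f)) y
  rw [pd_lap (contDiff_lap hf) j y, h1]

lemma pd_apply_eq (j : Fin N) (f : (Fin N → ℝ) → ℝ) (y : Fin N → ℝ) :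
    pd j f y = fderiv ℝ f y (Pi.single j 1) := rfl

lemma pd_coord (i j : Fin N) (y : Fin N → ℝ) :
    pd j (fun z => z i) y = (Pi.single j (1:ℝ) : Fin N → ℝ) i := by
  show fderiv ℝ (fun z => z i) y (Pi.single j 1) = _
  have : fderiv ℝ (fun z : Fin N → ℝ => z i) y = ContinuousLinearMap.proj i :=
    (ContinuousLinearMap.proj i : (Fin N → ℝ) →L[ℝ] ℝ).fderiv
  rw [this]; rfl

lemma pd_mul {f g : (Fin N → ℝ) → ℝ} (hf : DifferentiableAt ℝ f y) (hg : DifferentiableAt ℝ g y)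
    (j : Fin N) :
    pd j (fun z => f z * g z) y = f y * pd j g y + g y * pd j f y := by
  show fderiv ℝ (fun z => f z * g z) y (Pi.single j 1) = _
  rw [fderiv_fun_mul hf hg]
  simp [pd]

/-- The step lemma: differentiating shifts the eigenvalue by -1/4. -/
lemma step {f : (Fin N → ℝ) → ℝ} (hf : ContDiff ℝ (⊤ : ℕ∞) f) {lam : ℝ}
    (h : ∀ y, -biLap f y + (1/4) * (∑ i, y i * pd i f y) + ((N : ℝ)/4) * f y = lam * f y)
    (j : Fin N) :
    ∀ y, -biLap (pd j f) y + (1/4) * (∑ i, y i * pd i (pd j f) y)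
        + ((N : ℝ)/4) * pd j f y = (lam - 1/4) * pd j f y := by
  intro y
  -- differentiate the identity h in direction j
  have hBL : ContDiff ℝ (⊤ : ℕ∞) (biLap f) := contDiff_lap (contDiff_lap hf)
  have hterm : ∀ i : Fin N, ContDiff ℝ (⊤ : ℕ∞) (fun z => z i * pd i f z) := fun i =>
    ((ContinuousLinearMap.proj i : (Fin N → ℝ) →L[ℝ] ℝ).contDiff).mul (contDiff_pd hf i)
  have hS : ContDiff ℝ (⊤ : ℕ∞) (fun z => ∑ i, z i * pd i f z) :=
    ContDiff.sum fun i _ => hterm i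
  have hG : (fun z => -biLap f z + (1/4) * (∑ i, z i * pd i f z) + ((N : ℝ)/4) * f z)
      = fun z => lam * f z := funext h
  have hd1 : DifferentiableAt ℝ (fun z => -biLap f z) y := ((hBL.differentiable (by simp)) y).neg
  have hd2 : DifferentiableAt ℝ (fun z => (1/4 : ℝ) * (∑ i, z i * pd i f z)) y :=
    ((hS.differentiable (by simp)) y).const_mul _
  have hd3 : DifferentiableAt ℝ (fun z => ((N : ℝ)/4) * f z) y :=
    ((hf.differentiable (by simp)) y).const_mul _
  have key := congrArg (fun g => pd j g y) hG
  try simp only at key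
  rw [show (fun z => -biLap f z + (1/4) * (∑ i, z i * pd i f z) + ((N : ℝ)/4) * f z)
      = (fun z => (-biLap f z + (1/4) * (∑ i, z i * pd i f z)) + ((N : ℝ)/4) * f z) from rfl]
      at key
  rw [pd_apply_eq, fderiv_fun_add (hd1.fun_add hd2) hd3, ContinuousLinearMap.add_apply,
    fderiv_fun_add hd1 hd2, ContinuousLinearMap.add_apply, fderiv_fun_neg,
    fderiv_const_mul ((hS.differentiable (by simp)) y), fderiv_const_mul ((hf.differentiable (by simp)) y)]
      at key
  simp only [ContinuousLinearMap.neg_apply, ContinuousLinearMap.smul_apply, smul_eq_mul] at key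
  rw [pd_apply_eq j (fun z => lam * f z),
    fderiv_const_mul ((hf.differentiable (by simp)) y) lam] at key
  simp only [ContinuousLinearMap.smul_apply, smul_eq_mul] at key
  -- now rewrite the pieces
  have e1 : fderiv ℝ (biLap f) y (Pi.single j 1) = biLap (pd j f) y := pd_biLap hf j y
  have e2 : fderiv ℝ (fun z => ∑ i, z i * pd i f z) y (Pi.single j 1)
      = pd j f y + ∑ i, y i * pd i (pd j f) y := by
    have := pd_sum Finset.univ (fun i z => z i * pd i f z) (fun i _ => hterm i) j y
    rw [← pd_apply_eq, this]
    have e3 : ∀ i : Fin N, pd j (fun z => z i * pd i f z) y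
        = (Pi.single j (1:ℝ) : Fin N → ℝ) i * pd i f y + y i * pd i (pd j f) y := by
      intro i
      have hxi : DifferentiableAt ℝ (fun z : Fin N → ℝ => z i) y :=
        (ContinuousLinearMap.proj i : (Fin N → ℝ) →L[ℝ] ℝ).differentiableAt
      rw [pd_mul hxi (((contDiff_pd hf i).differentiable (by simp)) y) j,
        pd_coord, pd_comm hf j i y]
      ring
    rw [Finset.sum_congr rfl fun i _ => e3 i, Finset.sum_add_distrib]
    congr 1
    simp [Pi.single_apply]
  rw [e1, e2] at key
  have hfj := key
  -- hfj : -biLap (pd j f) y + 1/4 * (pd j f y + ∑ ...) + N/4 * pd j f y = lam * pd j f y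
  show _ = _
  rw [show fderiv ℝ f y (Pi.single j 1) = pd j f y from rfl] at hfj
  nlinarith [hfj]

def Eig {N : ℕ} (f : (Fin N → ℝ) → ℝ) (lam : ℝ) : Prop :=
  ∀ y, -biLap f y + (1/4) * (∑ i, y i * pd i f y) + ((N : ℝ)/4) * f y = lam * f y

lemma iterEig {f : (Fin N → ℝ) → ℝ} {lam : ℝ} (hf : ContDiff ℝ (⊤ : ℕ∞) f) (h : Eig f lam)
    (j : Fin N) (k : ℕ) :
    ContDiff ℝ (⊤ : ℕ∞) ((pd j)^[k] f) ∧ Eig ((pd j)^[k] f) (lam - k/4) := by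
  induction k with
  | zero => simpa using ⟨hf, h⟩
  | succ k ih =>
    rw [Function.iterate_succ_apply']
    refine ⟨contDiff_pd ih.1 j, ?_⟩
    have := step ih.1 ih.2 j
    intro y
    rw [this y]
    push_cast
    ring

lemma listEig (β : Fin N → ℕ) (l : List (Fin N)) {f : (Fin N → ℝ) → ℝ} {lam : ℝ}
    (hf : ContDiff ℝ (⊤ : ℕ∞) f) (h : Eig f lam) :
    ContDiff ℝ (⊤ : ℕ∞) (((l.map fun i => (pd i)^[β i]).foldr (· ∘ ·) id) f) ∧
      Eig (((l.map fun i => (pd i)^[β i]).foldr (· ∘ ·) id) f)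
        (lam - (l.map fun i => (β i : ℝ)).sum / 4) := by
  induction l with
  | nil => simpa using ⟨hf, h⟩
  | cons j l' ih =>
    simp only [List.map_cons, List.foldr_cons, Function.comp_apply, List.sum_cons]
    have key := iterEig ih.1 ih.2 j (β j)
    refine ⟨key.1, ?_⟩
    intro y
    rw [key.2 y]
    ring_nf

end Aux

/-- If F is a smooth solution of 𝐁F = −Δ²F + (1/4) y·∇F + (N/4)F = 0, then for every
multi-index β the derivative ψ_β = D^β F is an eigenfunction of 𝐁 with eigenvalue −|β|/4. -/
theorem dpow_fundamental_kernel_eigenfunction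
    (N : ℕ) (hN : 1 ≤ N) (F : (Fin N → ℝ) → ℝ) (hF : ContDiff ℝ (⊤ : ℕ∞) F)
    (heq : ∀ y : Fin N → ℝ,
      -biLap F y + (1/4) * (∑ i, y i * pd i F y) + ((N : ℝ)/4) * F y = 0) :
    ∀ β : Fin N → ℕ, ∀ y : Fin N → ℝ,
      -biLap (mDeriv β F) y + (1/4) * (∑ i, y i * pd i (mDeriv β F) y)
          + ((N : ℝ)/4) * mDeriv β F y
        = -((∑ i, (β i : ℝ))/4) * mDeriv β F y := by
  intro β y
  have h0 : Eig F 0 := by intro z; rw [heq z]; ring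
  have key := (listEig β (List.finRange N) hF h0).2 y
  have hsum : ((List.finRange N).map fun i => (β i : ℝ)).sum = ∑ i, (β i : ℝ) := by
    rw [← List.ofFn_eq_map, List.sum_ofFn]
  rw [show mDeriv β F = ((List.finRange N).map fun i => (pd i)^[β i]).foldr (· ∘ ·) id F from rfl]
  rw [key, hsum]
  ring
end

section
/- Let N ≥ 1 and let β ∈ ℕ^N be a multi-index with |β| = k. Define the polynomial function p_β : ℝ^N → ℝ by p_β(y) = Σ_{j=0}^{⌊k/4⌋} (1/j!) · (Δ²)^j (y^β), where y^β = y₁^{β₁}···y_N^{β_N} and (Δ²)^j is the j-th iterate of the bi-Laplacian. Then p_β satisfies −Δ²p_β(y) − (1/4)·(y·∇p_β(y)) = −(k/4)·p_β(y) for every y ∈ ℝ^N; that is, p_β is an eigenfunction of the adjoint operator 𝐁* = −Δ² − (1/4) y·∇ with eigenvalue −k/4. -/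
open MeasureTheory Real

/-- The monomial y^β = y₁^{β₁} ⋯ y_N^{β_N}. -/
def monomial {N : ℕ} (β : Fin N → ℕ) : (Fin N → ℝ) → ℝ :=
  fun y => ∏ i, (y i) ^ (β i)

/-!
Write `B` for the bi-Laplacian and `E = ∑ yᵢ ∂ᵢ` for the Euler operator on polynomials. `B` lowers
the degree of a homogeneous polynomial by 4, so Euler's identity gives `E (Bʲ m) = (k - 4j) Bʲ m`
for the monomial `m = y^β` of degree `k`, and `Bʲ m = 0` once `4j > k`. Hence `p_β = exp(B) m`
is a finite sum, and `B p_β = ∑ⱼ (j / j!) Bʲ m` by an index shift, so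
`B p_β + E p_β / 4 = ∑ⱼ (j + (k - 4j)/4) / j! · Bʲ m = (k/4) p_β`.
Since `pd`, `lap` and `biLap` act on polynomial functions through `pderiv`, it suffices to prove
this identity of polynomials and evaluate it.
-/

open Finset
open scoped Nat

theorem sum_range_inv_factorial_smul_succ {K V : Type*} [Field K] [CharZero K]
    [AddCommGroup V] [Module K V] (M : ℕ) (a : ℕ → V) (ha : a (M + 1) = 0) :
    ∑ j ∈ range (M + 1), (j ! : K)⁻¹ • a (j + 1) =
      ∑ j ∈ range (M + 1), ((j : K) / j !) • a j := by
  rw [sum_range_succ, ha, smul_zero, add_zero, sum_range_succ', Nat.cast_zero, zero_div,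
    zero_smul, add_zero]
  refine sum_congr rfl fun j _ => ?_
  rw [Nat.factorial_succ, Nat.cast_mul, ← div_div, div_self (Nat.cast_ne_zero.mpr j.succ_ne_zero),
    one_div]

namespace MvPolynomial

section Operators

variable {σ R : Type*} [CommSemiring R] [Fintype σ]

noncomputable def laplacian : Module.End R (MvPolynomial σ R) :=
  ∑ i, (pderiv i).toLinearMap ∘ₗ (pderiv i).toLinearMap

noncomputable def biLaplacian : Module.End R (MvPolynomial σ R) :=
  laplacian * laplacian

noncomputable def eulerOperator : Module.End R (MvPolynomial σ R) :=
  ∑ i, LinearMap.mulLeft R (X i) ∘ₗ (pderiv i).toLinearMap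

theorem laplacian_apply (q : MvPolynomial σ R) :
    laplacian q = ∑ i, pderiv i (pderiv i q) := by
  simp [laplacian]

theorem eulerOperator_apply (q : MvPolynomial σ R) :
    eulerOperator q = ∑ i, X i * pderiv i q := by
  simp [eulerOperator]

variable {q : MvPolynomial σ R} {n : ℕ}

theorem IsHomogeneous.eulerOperator (h : q.IsHomogeneous n) :
    MvPolynomial.eulerOperator q = n • q := by
  rw [eulerOperator_apply, h.sum_X_mul_pderiv]

theorem IsHomogeneous.laplacian (h : q.IsHomogeneous n) :
    (MvPolynomial.laplacian q).IsHomogeneous (n - 2) := by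
  rw [laplacian_apply, ← mem_homogeneousSubmodule]
  exact Submodule.sum_mem _ fun i _ => h.pderiv.pderiv

theorem IsHomogeneous.biLaplacian (h : q.IsHomogeneous n) :
    (MvPolynomial.biLaplacian q).IsHomogeneous (n - 4) :=
  h.laplacian.laplacian

theorem IsHomogeneous.biLaplacian_pow (h : q.IsHomogeneous n) (j : ℕ) :
    ((MvPolynomial.biLaplacian ^ j) q).IsHomogeneous (n - 4 * j) := by
  induction j with
  | zero => simpa using h
  | succ j ih =>
    rw [pow_succ', Module.End.mul_apply, Nat.mul_succ, ← Nat.sub_sub]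
    exact ih.biLaplacian

theorem IsHomogeneous.laplacian_eq_zero (h : q.IsHomogeneous n) (hn : n < 2) :
    MvPolynomial.laplacian q = 0 := by
  rw [laplacian_apply]
  refine sum_eq_zero fun i _ => ?_
  have hconst : (pderiv i q).IsHomogeneous 0 := by
    simpa [Nat.sub_eq_zero_of_le (Nat.le_of_lt_succ hn)] using h.pderiv (i := i)
  rw [totalDegree_eq_zero_iff_eq_C.mp ((totalDegree_zero_iff_isHomogeneous σ).mpr hconst),
    pderiv_C]

theorem IsHomogeneous.biLaplacian_eq_zero (h : q.IsHomogeneous n) (hn : n < 4) :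
    MvPolynomial.biLaplacian q = 0 :=
  h.laplacian.laplacian_eq_zero (by omega)

end Operators

section ExpBiLaplacian

variable {σ K : Type*} [Fintype σ] [Field K] {q : MvPolynomial σ K} {k : ℕ}

/-- `exp(Δ²) q` for `q` of degree `k`: the series stops at `k / 4` since `Δ²` lowers degrees
by 4. -/
noncomputable def expBiLaplacian (k : ℕ) (q : MvPolynomial σ K) : MvPolynomial σ K :=
  ∑ j ∈ range (k / 4 + 1), (j ! : K)⁻¹ • (biLaplacian ^ j) q

theorem biLaplacian_expBiLaplacian [CharZero K] (h : q.IsHomogeneous k) :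
    biLaplacian (expBiLaplacian k q) =
      ∑ j ∈ range (k / 4 + 1), ((j : K) / j !) • (biLaplacian ^ j) q := by
  have hvanish : (biLaplacian ^ (k / 4 + 1)) q = 0 := by
    rw [pow_succ', Module.End.mul_apply]
    exact (h.biLaplacian_pow (k / 4)).biLaplacian_eq_zero (by omega)
  rw [expBiLaplacian, map_sum, ← sum_range_inv_factorial_smul_succ _ _ hvanish]
  simp only [map_smul, pow_succ', Module.End.mul_apply]

theorem eulerOperator_expBiLaplacian (h : q.IsHomogeneous k) :
    eulerOperator (expBiLaplacian k q) =
      ∑ j ∈ range (k / 4 + 1), (j ! : K)⁻¹ • (k - 4 * j) • (biLaplacian ^ j) q := by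
  rw [expBiLaplacian, map_sum]
  exact sum_congr rfl fun j _ => by rw [map_smul, (h.biLaplacian_pow j).eulerOperator]

theorem biLaplacian_add_eulerOperator_expBiLaplacian [CharZero K] (h : q.IsHomogeneous k) :
    biLaplacian (expBiLaplacian k q) + (4 : K)⁻¹ • eulerOperator (expBiLaplacian k q) =
      ((k : K) / 4) • expBiLaplacian k q := by
  rw [biLaplacian_expBiLaplacian h, eulerOperator_expBiLaplacian h, expBiLaplacian, smul_sum,
    smul_sum, ← sum_add_distrib]
  refine sum_congr rfl fun j hjM => ?_
  have hj : 4 * j ≤ k := by rw [mem_range] at hjM; omega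
  rw [← Nat.cast_smul_eq_nsmul K, smul_smul, smul_smul, smul_smul, ← add_smul, Nat.cast_sub hj]
  congr 1
  push_cast
  field_simp
  ring

end ExpBiLaplacian

theorem hasFDerivAt_eval {σ 𝕜 : Type*} [Fintype σ] [NontriviallyNormedField 𝕜]
    (q : MvPolynomial σ 𝕜) (y : σ → 𝕜) :
    HasFDerivAt (eval · q)
      (∑ i, eval y (pderiv i q) • ContinuousLinearMap.proj i : (σ → 𝕜) →L[𝕜] 𝕜) y := by
  classical
  induction q using MvPolynomial.induction_on with
  | C a =>
    simp only [eval_C]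
    exact (hasFDerivAt_const a y).congr_fderiv (by ext; simp)
  | add p q hp hq =>
    simp only [map_add]
    refine (hp.add hq).congr_fderiv ?_
    ext v
    simp [add_mul, sum_add_distrib]
  | mul_X p n hp =>
    simp only [map_mul, eval_X]
    refine (hp.mul (hasFDerivAt_apply n y)).congr_fderiv ?_
    ext v
    simp only [add_apply, smul_apply, ContinuousLinearMap.proj_apply, _root_.sum_apply,
      smul_eq_mul, Derivation.leibniz, pderiv_X, Pi.single_apply, map_add, map_mul, eval_X]
    simp [add_mul, ite_mul, sum_add_distrib, mul_sum, mul_assoc]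

end MvPolynomial

open MvPolynomial (X eval pderiv)

section PolynomialFunctions

variable {N : ℕ}

theorem pd_eval (q : MvPolynomial (Fin N) ℝ) (i : Fin N) :
    pd i (eval · q) = (eval · (pderiv i q)) := by
  classical
  funext y
  simp [pd, (MvPolynomial.hasFDerivAt_eval q y).fderiv, Pi.single_apply]

theorem lap_eval (q : MvPolynomial (Fin N) ℝ) :
    lap (eval · q) = (eval · (MvPolynomial.laplacian q)) := by
  funext y
  simp only [lap, pd_eval, MvPolynomial.laplacian_apply, map_sum]

theorem biLap_eval (q : MvPolynomial (Fin N) ℝ) :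
    biLap (eval · q) = (eval · (MvPolynomial.biLaplacian q)) := by
  rw [biLap, lap_eval, lap_eval]
  rfl

theorem iterate_biLap_eval (q : MvPolynomial (Fin N) ℝ) (j : ℕ) :
    biLap^[j] (eval · q) = (eval · ((MvPolynomial.biLaplacian ^ j) q)) := by
  induction j with
  | zero => rfl
  | succ j ih =>
    rw [Function.iterate_succ_apply', ih, biLap_eval, pow_succ', Module.End.mul_apply]

theorem monomial_eq_eval (β : Fin N → ℕ) :
    monomial β = (eval · (∏ i, X i ^ β i : MvPolynomial (Fin N) ℝ)) := by
  funext y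
  simp [monomial]

end PolynomialFunctions

theorem generalized_hermite_polynomial_adjoint_eigenfunction_general
    (N : ℕ) (β : Fin N → ℕ) (k : ℕ) (hk : ∑ i, β i = k)
    (p : (Fin N → ℝ) → ℝ)
    (hp : p = fun y => ∑ j ∈ Finset.range (k / 4 + 1),
      (1 / (Nat.factorial j : ℝ)) * (biLap^[j] (monomial β)) y) :
    ∀ y : Fin N → ℝ,
      -biLap p y - (1/4) * (∑ i, y i * pd i p y) = -((k : ℝ)/4) * p y := by
  intro y
  have hhom : (∏ i, X i ^ β i : MvPolynomial (Fin N) ℝ).IsHomogeneous k :=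
    hk ▸ .prod _ _ _ fun i _ => MvPolynomial.isHomogeneous_X_pow i (β i)
  have hpoly : p = (eval · (MvPolynomial.expBiLaplacian k (∏ i, X i ^ β i))) := by
    funext z
    simp only [hp, MvPolynomial.expBiLaplacian, map_sum, MvPolynomial.smul_eval,
      monomial_eq_eval, iterate_biLap_eval, one_div]
  have key := congrArg (eval y) (MvPolynomial.biLaplacian_add_eulerOperator_expBiLaplacian hhom)
  simp only [map_add, MvPolynomial.smul_eval, MvPolynomial.eulerOperator_apply, map_sum, map_mul,
    MvPolynomial.eval_X] at key
  rw [hpoly, biLap_eval]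
  simp only [pd_eval]
  linarith

/-- The generalized Hermite polynomial p_β(y) = Σ_{j=0}^{⌊k/4⌋} (1/j!) (Δ²)^j (y^β),
where k = |β|, is an eigenfunction of the adjoint operator 𝐁* = −Δ² − (1/4) y·∇ with
eigenvalue −k/4. -/
theorem generalized_hermite_polynomial_adjoint_eigenfunction
    (N : ℕ) (hN : 1 ≤ N) (β : Fin N → ℕ) (k : ℕ) (hk : ∑ i, β i = k)
    (p : (Fin N → ℝ) → ℝ)
    (hp : p = fun y => ∑ j ∈ Finset.range (k / 4 + 1),
      (1 / (Nat.factorial j : ℝ)) * (biLap^[j] (monomial β)) y) :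
    ∀ y : Fin N → ℝ,
      -biLap p y - (1/4) * (∑ i, y i * pd i p y) = -((k : ℝ)/4) * p y :=
  generalized_hermite_polynomial_adjoint_eigenfunction_general N β k hk p hp
end
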